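/- arXiv:1205.1928 — 4 statements merged into one kernel-verified Lean document; each statement's English description precedes it below -/
import Mathlib

section
/- Let H be a real Hilbert space with dim H ≥ 2, and Ω: H → ℝ ∪ {+∞} satisfy Ω(x+y) ≥ max(Ω(x), Ω(y)) for all orthogonal x, y ∈ H. Then Ω(x) ≥ Ω(λx) for all x ∈ H and all λ ∈ [0,1]. -/
/-!
Given `x` and `λ ∈ [0, 1]`, pick `u ⟂ x` with `‖u‖² = λ(1 - λ)‖x‖²`, which needs a second
dimension. The point `w = λx + u` lies on the Thales sphere over the segment `[0, x]`, i.e.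
`w ⟂ x - w`. Applying the hypothesis to the orthogonal splittings `w = λx + u` and
`x = w + (x - w)` gives `Ω(λx) ≤ Ω(w) ≤ Ω(x)`.
-/

open RealInnerProductSpace

theorem LinearMap.exists_ne_zero_apply_eq_zero_of_one_lt_rank {K V : Type*} [Field K]
    [AddCommGroup V] [Module K V] (hV : 1 < Module.rank K V) (f : V →ₗ[K] K) :
    ∃ v ≠ 0, f v = 0 := by
  by_contra! hf
  have hinj : Function.Injective f :=
    (injective_iff_map_eq_zero f).mpr fun v hv => by_contra fun hne => hf v hne hv
  have hle := f.lift_rank_le_of_injective hinj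
  rw [Module.rank_self, Cardinal.lift_one, Cardinal.lift_le_one_iff] at hle
  exact hle.not_gt hV

section InnerProductSpace

variable {H : Type*} [NormedAddCommGroup H] [InnerProductSpace ℝ H]

theorem exists_inner_eq_zero_norm_eq (hH : 1 < Module.rank ℝ H) (x : H) {r : ℝ} (hr : 0 ≤ r) :
    ∃ u : H, ⟪x, u⟫ = 0 ∧ ‖u‖ = r := by
  obtain ⟨v, hv, hxv⟩ :=
    (innerₛₗ ℝ x).exists_ne_zero_apply_eq_zero_of_one_lt_rank hH
  refine ⟨(r / ‖v‖) • v, ?_, ?_⟩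
  · rw [real_inner_smul_right, show ⟪x, v⟫ = 0 from hxv, mul_zero]
  · rw [norm_smul, Real.norm_of_nonneg (by positivity),
      div_mul_cancel₀ r (norm_ne_zero_iff.mpr hv)]

theorem inner_smul_add_sub_smul_add_eq_zero {x u : H} {lam : ℝ} (hxu : ⟪x, u⟫ = 0)
    (hu : ‖u‖ ^ 2 = lam * (1 - lam) * ‖x‖ ^ 2) :
    ⟪lam • x + u, x - (lam • x + u)⟫ = 0 := by
  have hux : ⟪u, x⟫ = 0 := by rw [real_inner_comm, hxu]
  simp only [inner_sub_right, inner_add_left, inner_add_right, real_inner_smul_left,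
    real_inner_smul_right, hxu, hux]
  rw [real_inner_self_eq_norm_sq x, real_inner_self_eq_norm_sq u, hu]
  ring

end InnerProductSpace

theorem stmt1_general {H : Type*} [NormedAddCommGroup H] [InnerProductSpace ℝ H]
    (hdim : 2 ≤ Module.rank ℝ H)
    (Ω : H → EReal)
    (hΩ : ∀ x y : H, ⟪x, y⟫ = 0 → Ω (x + y) ≥ max (Ω x) (Ω y)) :
    ∀ x : H, ∀ lam ∈ Set.Icc (0 : ℝ) 1, Ω x ≥ Ω (lam • x) := by
  rintro x lam ⟨hl0, hl1⟩
  obtain ⟨u, hxu, hu⟩ := exists_inner_eq_zero_norm_eq (Cardinal.two_le_iff_one_lt.mp hdim) x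
    (r := √(lam * (1 - lam)) * ‖x‖) (by positivity)
  have hu2 : ‖u‖ ^ 2 = lam * (1 - lam) * ‖x‖ ^ 2 := by
    rw [hu, mul_pow, Real.sq_sqrt (mul_nonneg hl0 (by linarith))]
  set w := lam • x + u
  have hlam_w : Ω (lam • x) ≤ Ω w :=
    (le_max_left _ _).trans (hΩ _ _ (by rw [real_inner_smul_left, hxu, mul_zero]))
  have hw_x : Ω w ≤ Ω x := by
    have := hΩ w (x - w) (inner_smul_add_sub_smul_add_eq_zero hxu hu2)
    rw [add_sub_cancel] at this
    exact (le_max_left _ _).trans this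
  exact hlam_w.trans hw_x

theorem stmt1 {H : Type*} [NormedAddCommGroup H] [InnerProductSpace ℝ H] [CompleteSpace H]
    (hdim : 2 ≤ Module.rank ℝ H)
    (Ω : H → EReal)
    (hΩ : ∀ x y : H, ⟪x, y⟫ = 0 → Ω (x + y) ≥ max (Ω x) (Ω y)) :
    ∀ x : H, ∀ lam ∈ Set.Icc (0 : ℝ) 1, Ω x ≥ Ω (lam • x) :=
  stmt1_general hdim Ω hΩ
end

section
/- Let H be a real Hilbert space with dim H ≥ 2, and let Ω: H → ℝ ∪ {+∞} be lower semicontinuous. Then Ω(w) = h(‖w‖) for some nondecreasing h: ℝ → ℝ ∪ {+∞} if and only if Ω(x+y) ≥ max(Ω(x), Ω(y)) for all x, y ∈ H with ⟨x,y⟩ = 0. -/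
/-!
If `⟪p, w - p⟫ = 0` then orthomonotonicity gives `Ω p ≤ Ω w`. In the plane spanned by orthonormal
`e, u`, turning a point by an angle `α` while dividing its radius by `cos α` is such a step, so `n`
steps of angle `θ / n` show `Ω ((r * cos (θ / n) ^ n) • e) ≤ Ω y` for the point `y` of radius `r`
at angle `θ`. Since `cos (θ / n) ^ n → 1`, lower semicontinuity gives `Ω (r • e) ≤ Ω y`, so `Ω` is
constant on spheres; one more orthogonal step `x ↦ x + s • u` makes it nondecreasing in the radius.
-/

open RealInnerProductSpace

section

variable {H : Type*} [NormedAddCommGroup H] [InnerProductSpace ℝ H]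

lemma exists_norm_eq_one_inner_eq_zero (hdim : 2 ≤ Module.rank ℝ H) (x : H) :
    ∃ u : H, ‖u‖ = 1 ∧ ⟪x, u⟫ = 0 := by
  have hne : (ℝ ∙ x)ᗮ ≠ ⊥ := by
    rw [Ne, Submodule.orthogonal_eq_bot_iff]
    intro htop
    have := rank_span_le (R := ℝ) ({x} : Set H)
    rw [htop, rank_top, Cardinal.mk_singleton] at this
    exact absurd (hdim.trans this) (by norm_num)
  obtain ⟨v, hv, hv0⟩ := Submodule.exists_mem_ne_zero_of_ne_bot hne
  refine ⟨‖v‖⁻¹ • v, norm_smul_inv_norm hv0, ?_⟩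
  rw [real_inner_smul_right, Submodule.mem_orthogonal_singleton_iff_inner_right.mp hv, mul_zero]

lemma exists_norm_eq_one_inner_eq_zero_and_eq_norm_smul (hdim : 2 ≤ Module.rank ℝ H) {e v : H}
    (hv : ⟪e, v⟫ = 0) : ∃ u : H, ‖u‖ = 1 ∧ ⟪e, u⟫ = 0 ∧ v = ‖v‖ • u := by
  rcases eq_or_ne v 0 with rfl | hv0
  · obtain ⟨u, hu, heu⟩ := exists_norm_eq_one_inner_eq_zero hdim e
    exact ⟨u, hu, heu, by simp⟩
  · refine ⟨‖v‖⁻¹ • v, norm_smul_inv_norm hv0, ?_, ?_⟩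
    · rw [real_inner_smul_right, hv, mul_zero]
    · rw [smul_inv_smul₀ (norm_ne_zero_iff.mpr hv0)]

lemma one_sub_sq_div_le_cos_div_pow {θ : ℝ} {n : ℕ} (hθ : |θ| ≤ n) :
    1 - θ ^ 2 / (2 * n) ≤ Real.cos (θ / n) ^ n := by
  rcases n.eq_zero_or_pos with rfl | hn
  · simp_all
  have hn' : (0 : ℝ) < n := by exact_mod_cast hn
  have hsq : (θ / n) ^ 2 ≤ 1 := by
    rw [div_pow, div_le_one (by positivity), ← sq_abs]
    exact pow_le_pow_left₀ (abs_nonneg θ) hθ 2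
  calc 1 - θ ^ 2 / (2 * n) = 1 + n * (-((θ / n) ^ 2 / 2)) := by field_simp; ring
    _ ≤ (1 + -((θ / n) ^ 2 / 2)) ^ n := one_add_mul_le_pow (by linarith) n
    _ ≤ Real.cos (θ / n) ^ n :=
      pow_le_pow_left₀ (by linarith) (by linarith [Real.one_sub_sq_div_two_le_cos (x := θ / n)]) n

lemma tendsto_cos_div_pow_atTop (θ : ℝ) :
    Filter.Tendsto (fun n : ℕ => Real.cos (θ / n) ^ n) Filter.atTop (nhds 1) := by
  have hlower : Filter.Tendsto (fun n : ℕ => 1 - θ ^ 2 / (2 * n)) Filter.atTop (nhds 1) := by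
    simpa using tendsto_const_nhds.sub <| tendsto_const_nhds.div_atTop <|
      tendsto_natCast_atTop_atTop.const_mul_atTop (zero_lt_two : (0 : ℝ) < 2)
  refine tendsto_of_tendsto_of_tendsto_of_le_of_le' hlower tendsto_const_nhds ?_ ?_
  · filter_upwards [tendsto_natCast_atTop_atTop.eventually_ge_atTop |θ|] with n hn
    exact one_sub_sq_div_le_cos_div_pow hn
  · refine Filter.Eventually.of_forall fun n => (le_abs_self _).trans ?_
    rw [abs_pow]
    exact pow_le_one₀ (abs_nonneg _) (Real.abs_cos_le_one _)

noncomputable def polarPoint (e u : H) (r φ : ℝ) : H := (r * Real.cos φ) • e + (r * Real.sin φ) • u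

section Polar

variable {e u : H} (he : ‖e‖ = 1) (hu : ‖u‖ = 1) (heu : ⟪e, u⟫ = 0)
include he hu heu

lemma inner_polarPoint (r s φ ψ : ℝ) :
    ⟪polarPoint e u r φ, polarPoint e u s ψ⟫ = r * s * Real.cos (ψ - φ) := by
  have hue : ⟪u, e⟫ = 0 := by rwa [real_inner_comm]
  simp only [polarPoint, inner_add_left, inner_add_right, real_inner_smul_left,
    real_inner_smul_right, real_inner_self_eq_norm_sq, he, hu, heu, hue, Real.cos_sub]
  ring

lemma norm_polarPoint (r φ : ℝ) : ‖polarPoint e u r φ‖ = |r| := by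
  rw [norm_eq_sqrt_real_inner, inner_polarPoint he hu heu, sub_self, Real.cos_zero, mul_one,
    Real.sqrt_mul_self_eq_abs]

end Polar

lemma exists_eq_polarPoint (hdim : 2 ≤ Module.rank ℝ H) {e : H} (he : ‖e‖ = 1) (y : H) :
    ∃ u : H, ‖u‖ = 1 ∧ ⟪e, u⟫ = 0 ∧ ∃ θ : ℝ, y = polarPoint e u ‖y‖ θ := by
  set v := y - ⟪e, y⟫ • e
  have hv : ⟪e, v⟫ = 0 := by
    rw [inner_sub_right, real_inner_smul_right, real_inner_self_eq_norm_sq, he]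
    ring
  obtain ⟨u, hu, heu, hvu⟩ := exists_norm_eq_one_inner_eq_zero_and_eq_norm_smul hdim hv
  let z : ℂ := ⟨⟪e, y⟫, ‖v‖⟩
  have hy : y = polarPoint e u ‖z‖ z.arg := by
    rw [polarPoint, Complex.norm_mul_cos_arg, Complex.norm_mul_sin_arg, ← hvu]
    exact (add_sub_cancel _ _).symm
  refine ⟨u, hu, heu, z.arg, ?_⟩
  rw [hy, norm_polarPoint he hu heu, abs_norm, ← hy]

variable {β : Type*} [LinearOrder β]

def Orthomonotone (Ω : H → β) : Prop :=
  ∀ x y : H, ⟪x, y⟫ = 0 → max (Ω x) (Ω y) ≤ Ω (x + y)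

lemma orthomonotone_comp_norm {h : ℝ → β} (hh : Monotone h) :
    Orthomonotone fun w : H => h ‖w‖ := by
  intro x y hxy
  have hsq := norm_add_sq_eq_norm_sq_add_norm_sq_real hxy
  exact max_le (hh (by nlinarith [norm_nonneg x, norm_nonneg (x + y)]))
    (hh (by nlinarith [norm_nonneg y, norm_nonneg (x + y)]))

namespace Orthomonotone

variable {Ω : H → β} (hΩ : Orthomonotone Ω)
include hΩ

lemma le_of_inner_sub_eq_zero {p w : H} (h : ⟪p, w - p⟫ = 0) : Ω p ≤ Ω w := by
  simpa using (le_max_left _ _).trans (hΩ p (w - p) h)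

lemma le_polarPoint_add {e u : H} (he : ‖e‖ = 1) (hu : ‖u‖ = 1) (heu : ⟪e, u⟫ = 0)
    (r φ α : ℝ) : Ω (polarPoint e u (r * Real.cos α) φ) ≤ Ω (polarPoint e u r (φ + α)) := by
  apply hΩ.le_of_inner_sub_eq_zero
  rw [inner_sub_right, inner_polarPoint he hu heu, inner_polarPoint he hu heu,
    add_sub_cancel_left, sub_self, Real.cos_zero]
  ring

lemma le_polarPoint_add_mul {e u : H} (he : ‖e‖ = 1) (hu : ‖u‖ = 1) (heu : ⟪e, u⟫ = 0)
    (r φ α : ℝ) (k : ℕ) :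
    Ω (polarPoint e u (r * Real.cos α ^ k) φ) ≤ Ω (polarPoint e u r (φ + k * α)) := by
  induction k generalizing r with
  | zero => simp
  | succ k ih =>
    calc Ω (polarPoint e u (r * Real.cos α ^ (k + 1)) φ)
        = Ω (polarPoint e u (r * Real.cos α * Real.cos α ^ k) φ) := by ring_nf
      _ ≤ Ω (polarPoint e u (r * Real.cos α) (φ + k * α)) := ih _
      _ ≤ Ω (polarPoint e u r (φ + (k + 1 : ℕ) * α)) := by
        push_cast
        rw [add_one_mul, ← add_assoc]
        exact hΩ.le_polarPoint_add he hu heu r _ α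

lemma le_of_norm_eq (hdim : 2 ≤ Module.rank ℝ H) (hlsc : LowerSemicontinuous Ω) {x y : H}
    (hxy : ‖x‖ = ‖y‖) : Ω x ≤ Ω y := by
  rcases eq_or_ne x 0 with rfl | hx
  · rw [norm_zero, eq_comm, norm_eq_zero] at hxy
    rw [hxy]
  set e := ‖x‖⁻¹ • x
  have he : ‖e‖ = 1 := norm_smul_inv_norm hx
  obtain ⟨u, hu, heu, θ, hy⟩ := exists_eq_polarPoint hdim he y
  rw [← hxy] at hy
  have hchain : ∀ n : ℕ, n ≠ 0 →
      Ω (polarPoint e u (‖x‖ * Real.cos (θ / n) ^ n) 0) ≤ Ω y := fun n hn => by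
    have := hΩ.le_polarPoint_add_mul he hu heu ‖x‖ 0 (θ / n) n
    rwa [zero_add, mul_div_cancel₀ _ (Nat.cast_ne_zero.mpr hn), ← hy] at this
  have htend : Filter.Tendsto (fun n : ℕ => polarPoint e u (‖x‖ * Real.cos (θ / n) ^ n) 0)
      Filter.atTop (nhds x) := by
    have := ((tendsto_cos_div_pow_atTop θ).const_mul ‖x‖).smul_const e
    simpa [polarPoint, e, smul_inv_smul₀ (norm_ne_zero_iff.mpr hx)] using this
  exact (hlsc.isClosed_preimage (Ω y)).mem_of_tendsto htend
    (Filter.eventually_ne_atTop 0 |>.mono hchain)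

lemma le_of_norm_le (hdim : 2 ≤ Module.rank ℝ H) (hlsc : LowerSemicontinuous Ω) {x y : H}
    (hxy : ‖x‖ ≤ ‖y‖) : Ω x ≤ Ω y := by
  obtain ⟨u, hu, hxu⟩ := exists_norm_eq_one_inner_eq_zero hdim x
  set s := √(‖y‖ ^ 2 - ‖x‖ ^ 2)
  have hxsu : ⟪x, s • u⟫ = 0 := by rw [real_inner_smul_right, hxu, mul_zero]
  have hnorm : ‖x + s • u‖ = ‖y‖ := by
    have hs : s ^ 2 = ‖y‖ ^ 2 - ‖x‖ ^ 2 :=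
      Real.sq_sqrt (sub_nonneg.mpr (pow_le_pow_left₀ (norm_nonneg x) hxy 2))
    have := norm_add_sq_eq_norm_sq_add_norm_sq_real hxsu
    rw [norm_smul, hu, mul_one, Real.norm_eq_abs, abs_mul_abs_self] at this
    nlinarith [norm_nonneg (x + s • u), norm_nonneg y]
  exact ((le_max_left _ _).trans (hΩ x _ hxsu)).trans (hΩ.le_of_norm_eq hdim hlsc hnorm)

end Orthomonotone

end

theorem stmt5_general {H : Type*} [NormedAddCommGroup H] [InnerProductSpace ℝ H]
    (hdim : 2 ≤ Module.rank ℝ H)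
    (Ω : H → EReal) (hlsc : LowerSemicontinuous Ω) :
    (∃ h : ℝ → EReal, Monotone h ∧ ∀ w, Ω w = h ‖w‖) ↔
      (∀ x y : H, ⟪x, y⟫ = 0 → Ω (x + y) ≥ max (Ω x) (Ω y)) := by
  refine ⟨fun ⟨h, hh, hΩh⟩ => ?_, fun (hΩ : Orthomonotone Ω) => ?_⟩
  · obtain rfl : Ω = fun w => h ‖w‖ := funext hΩh
    exact orthomonotone_comp_norm hh
  obtain ⟨e, he, -⟩ := exists_norm_eq_one_inner_eq_zero hdim (0 : H)
  have hnorm (t : ℝ) : ‖max t 0 • e‖ = max t 0 := by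
    rw [norm_smul_of_nonneg (le_max_right t 0), he, mul_one]
  refine ⟨fun t => Ω (max t 0 • e), fun s t hst => ?_, fun w => ?_⟩
  · exact hΩ.le_of_norm_le hdim hlsc (by simpa only [hnorm] using max_le_max_right 0 hst)
  · have hw : ‖w‖ = ‖max ‖w‖ 0 • e‖ := by rw [hnorm, max_eq_left (norm_nonneg w)]
    exact le_antisymm (hΩ.le_of_norm_eq hdim hlsc hw) (hΩ.le_of_norm_eq hdim hlsc hw.symm)

theorem stmt5 {H : Type*} [NormedAddCommGroup H] [InnerProductSpace ℝ H] [CompleteSpace H]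
    (hdim : 2 ≤ Module.rank ℝ H)
    (Ω : H → EReal) (hlsc : LowerSemicontinuous Ω) :
    (∃ h : ℝ → EReal, Monotone h ∧ ∀ w, Ω w = h ‖w‖) ↔
      (∀ x y : H, ⟪x, y⟫ = 0 → Ω (x + y) ≥ max (Ω x) (Ω y)) :=
  stmt5_general hdim Ω hlsc
end

section
/- Let H be a real Hilbert space with dim H ≥ 2 and Ω: H → ℝ ∪ {+∞} lower semicontinuous with Ω(x+y) ≥ max(Ω(x), Ω(y)) for all orthogonal x, y. Then for every c ≥ Ω(0), the sublevel set S_c = {x : Ω(x) ≤ c} is either a closed ball centered at the origin or all of H. -/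
/-!
If `⟪x, p - x⟫ = 0` then `p = x + (p - x)` is an orthogonal sum, so `Ω x ≤ Ω p`: a sublevel set
contains, with each point `p`, the whole sphere with diameter `[0, p]`. In a plane through the
origin, identified with `ℂ`, this says `p ∈ S → p * q ∈ S` for every `q` on the circle with
diameter `[0, 1]`, such as `q = cos β * exp (β * I)`. Taking `n` steps with `β = φ / n` rotates `p`
by `φ` while shrinking it only by the factor `cos (φ / n) ^ n → 1`, and two further steps `q`,
`conj q` shrink it by any factor in `[0, 1]`. Hence `S` contains every `z` with `‖z‖ < ‖p‖`, and a
closed set with this property is a closed ball or the whole space.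
-/

open RealInnerProductSpace

def ThalesClosed {E : Type*} [NormedAddCommGroup E] [InnerProductSpace ℝ E] (S : Set E) : Prop :=
  ∀ ⦃p x : E⦄, ⟪x, p - x⟫ = 0 → p ∈ S → x ∈ S

theorem Real.exists_lt_cos_div_pow (φ : ℝ) {t : ℝ} (ht : t < 1) :
    ∃ n : ℕ, n ≠ 0 ∧ t < Real.cos (φ / n) ^ n := by
  obtain ⟨n, hn⟩ := exists_nat_gt (φ ^ 2 / (2 * (1 - t)) + φ ^ 2)
  have hφt : 0 ≤ φ ^ 2 / (2 * (1 - t)) := div_nonneg (sq_nonneg φ) (by linarith)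
  have hn_pos : (0 : ℝ) < n := by nlinarith [sq_nonneg φ]
  have hn_one : (1 : ℝ) ≤ n := Nat.one_le_cast.2 (Nat.cast_pos.1 hn_pos)
  set a := (φ / n) ^ 2 / 2 with ha
  have hna : n * a = φ ^ 2 / (2 * n) := by rw [ha]; field_simp
  have hna_half : n * a < 1 / 2 := by
    rw [hna, div_lt_iff₀ (by positivity)]; nlinarith
  have hna_t : n * a < 1 - t := by
    have : φ ^ 2 / (2 * (1 - t)) < n := by nlinarith [sq_nonneg φ]
    rw [div_lt_iff₀ (by linarith)] at this
    rw [hna, div_lt_iff₀ (by positivity)]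
    linarith
  have ha_half : a < 1 / 2 := lt_of_le_of_lt (le_mul_of_one_le_left (by positivity) hn_one) hna_half
  refine ⟨n, Nat.cast_ne_zero.1 hn_pos.ne', ?_⟩
  calc t < 1 + n * -a := by linarith
    _ ≤ (1 + -a) ^ n := one_add_mul_le_pow (by linarith) n
    _ ≤ Real.cos (φ / n) ^ n := by
      gcongr
      · linarith
      · linarith [Real.one_sub_sq_div_two_le_cos (x := φ / n)]

section

variable {E F : Type*} [NormedAddCommGroup E] [InnerProductSpace ℝ E]
  [NormedAddCommGroup F] [InnerProductSpace ℝ F]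

theorem thalesClosed_setOf_le {β : Type*} [LinearOrder β] {Ω : E → β}
    (hΩ : ∀ x y : E, ⟪x, y⟫ = 0 → Ω (x + y) ≥ max (Ω x) (Ω y)) (c : β) :
    ThalesClosed {x | Ω x ≤ c} := by
  intro p x hx hp
  have h := hΩ x (p - x) hx
  rw [add_sub_cancel] at h
  exact (le_max_left _ _).trans (h.trans hp)

theorem ThalesClosed.preimage {S : Set F} (hS : ThalesClosed S) (f : E →ₗᵢ[ℝ] F) :
    ThalesClosed (f ⁻¹' S) := by
  intro p x hx hp
  refine hS (p := f p) ?_ hp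
  rwa [← map_sub, f.inner_map_map]

end

theorem Complex.normSq_cos_mul_exp_eq_re (β : ℝ) :
    normSq (Real.cos β * exp (β * I)) = (Real.cos β * exp (β * I)).re := by
  rw [normSq_eq_norm_sq, norm_mul, norm_exp_ofReal_mul_I, re_ofReal_mul, exp_ofReal_mul_I_re,
    norm_real, Real.norm_eq_abs, mul_one, sq_abs, sq]

namespace ThalesClosed

open Complex ComplexConjugate

variable {S : Set ℂ} {p : ℂ}

theorem mul_mem_of_normSq_eq_re (hS : ThalesClosed S) (hp : p ∈ S) {q : ℂ}
    (hq : normSq q = q.re) : p * q ∈ S := by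
  refine hS ?_ hp
  rw [Complex.inner, ← mul_one_sub, map_mul, mul_mul_mul_comm, mul_conj, re_ofReal_mul, sub_mul,
    one_mul, mul_conj, sub_re, conj_re, ofReal_re, hq, sub_self, mul_zero]

theorem mul_pow_mem (hS : ThalesClosed S) (hp : p ∈ S) {q : ℂ} (hq : normSq q = q.re) (n : ℕ) :
    p * q ^ n ∈ S := by
  induction n with
  | zero => simpa using hp
  | succ n ih => simpa [pow_succ, mul_assoc] using hS.mul_mem_of_normSq_eq_re ih hq

theorem mul_ofReal_mem (hS : ThalesClosed S) (hp : p ∈ S) {t : ℝ} (ht₀ : 0 ≤ t) (ht₁ : t ≤ 1) :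
    p * t ∈ S := by
  -- `q` and `conj q` lie on the circle with diameter `[0, 1]`, and `q * conj q = t`.
  set q : ℂ := ⟨t, √(t - t ^ 2)⟩
  have hsq : √(t - t ^ 2) ^ 2 = t - t ^ 2 := Real.sq_sqrt (by nlinarith)
  have hq : normSq q = t := by simp [normSq_apply, q, ← sq, hsq]
  have h := hS.mul_mem_of_normSq_eq_re (hS.mul_mem_of_normSq_eq_re hp (q := q) (by simp [hq, q]))
    (q := conj q) (by simp [hq, q])
  rwa [mul_assoc, mul_conj, hq] at h

theorem mul_mem (hS : ThalesClosed S) (hp : p ∈ S) {q : ℂ} (hq : ‖q‖ < 1) : p * q ∈ S := by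
  obtain ⟨n, hn, hcos⟩ := Real.exists_lt_cos_div_pow (arg q) hq
  have hc : 0 < Real.cos (arg q / n) ^ n := (norm_nonneg q).trans_lt hcos
  have h := hS.mul_ofReal_mem (hS.mul_pow_mem hp (normSq_cos_mul_exp_eq_re (arg q / n)) n)
    (div_nonneg (norm_nonneg q) hc.le) (div_le_one_of_le₀ hcos.le hc.le)
  convert h using 1
  have harg : (n : ℂ) * ((arg q / n : ℝ) * I) = arg q * I := by
    push_cast
    field_simp
  have hc' : (Real.cos (arg q / n) : ℂ) ^ n ≠ 0 := by exact_mod_cast hc.ne'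
  rw [mul_assoc, mul_pow, ← exp_nat_mul, harg]
  conv_lhs => rw [← norm_mul_exp_arg_mul_I q]
  push_cast at hc' ⊢
  field_simp

end ThalesClosed

section

variable {H : Type*} [NormedAddCommGroup H] [InnerProductSpace ℝ H]

theorem nontrivial_orthogonal_span_singleton (hdim : 2 ≤ Module.rank ℝ H) (v : H) :
    Nontrivial (ℝ ∙ v)ᗮ := by
  rw [Submodule.nontrivial_iff_ne_bot, Ne, Submodule.orthogonal_eq_bot_iff]
  intro htop
  have h := rank_span_le (R := ℝ) ({v} : Set H)
  rw [htop, rank_top, Cardinal.mk_singleton] at h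
  exact absurd (hdim.trans h) (by norm_num)

theorem exists_norm_eq_one_smul_eq {E : Type*} [NormedAddCommGroup E] [NormedSpace ℝ E]
    [Nontrivial E] (w : E) : ∃ e : E, ‖e‖ = 1 ∧ ∃ b : ℝ, b • e = w := by
  rcases eq_or_ne w 0 with rfl | hw
  · obtain ⟨e, he⟩ := exists_norm_eq E zero_le_one
    exact ⟨e, he, 0, zero_smul ℝ e⟩
  · exact ⟨‖w‖⁻¹ • w, norm_smul_inv_norm hw, ‖w‖, smul_inv_smul₀ (norm_ne_zero_iff.2 hw) w⟩

theorem exists_linearIsometry_complex (hdim : 2 ≤ Module.rank ℝ H) (y z : H) :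
    ∃ (f : ℂ →ₗᵢ[ℝ] H) (a b : ℂ), f a = y ∧ f b = z := by
  have : Nontrivial H := rank_pos_iff_nontrivial.1 (lt_of_lt_of_le (by norm_num) hdim)
  obtain ⟨e₁, he₁, a, rfl⟩ := exists_norm_eq_one_smul_eq y
  obtain ⟨u, hu, w, hw, rfl⟩ := (ℝ ∙ e₁).exists_add_mem_mem_orthogonal z
  obtain ⟨c, rfl⟩ := Submodule.mem_span_singleton.1 hu
  have := nontrivial_orthogonal_span_singleton hdim e₁
  obtain ⟨e₂, he₂, b, hb⟩ := exists_norm_eq_one_smul_eq (⟨w, hw⟩ : (ℝ ∙ e₁)ᗮ)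
  replace he₂ : ‖(e₂ : H)‖ = 1 := he₂
  replace hb : b • (e₂ : H) = w := congrArg Subtype.val hb
  have h₁₂ : ⟪e₁, (e₂ : H)⟫ = 0 :=
    Submodule.mem_orthogonal_singleton_iff_inner_right.1 e₂.2
  let f : ℂ →ₗ[ℝ] H := Complex.reLm.smulRight e₁ + Complex.imLm.smulRight (e₂ : H)
  refine ⟨f.isometryOfInner fun x x' => ?_, a, c + b * Complex.I, ?_, ?_⟩
  · have h₂₁ : ⟪(e₂ : H), e₁⟫ = 0 := by rw [real_inner_comm, h₁₂]
    simp only [f, LinearMap.add_apply, LinearMap.smulRight_apply, Complex.reLm_coe,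
      Complex.imLm_coe, inner_add_left, inner_add_right, real_inner_smul_left,
      real_inner_smul_right, h₁₂, h₂₁, real_inner_self_eq_norm_sq, he₁, he₂,
      Complex.inner, Complex.mul_re, Complex.conj_re, Complex.conj_im]
    ring
  · simp [f]
  · simp [f, hb]

theorem ThalesClosed.mem_of_norm_lt (hdim : 2 ≤ Module.rank ℝ H) {S : Set H}
    (hS : ThalesClosed S) {y z : H} (hy : y ∈ S) (hz : ‖z‖ < ‖y‖) : z ∈ S := by
  obtain ⟨f, a, b, rfl, rfl⟩ := exists_linearIsometry_complex hdim y z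
  rw [f.norm_map, f.norm_map] at hz
  have ha : a ≠ 0 := norm_pos_iff.1 ((norm_nonneg b).trans_lt hz)
  have h := (hS.preimage f).mul_mem hy (q := b / a) (by
    rwa [norm_div, div_lt_one (norm_pos_iff.2 ha)])
  rwa [mul_div_cancel₀ b ha] at h

end

theorem eq_closedBall_or_eq_univ_of_norm_lt {E : Type*} [NormedAddCommGroup E] [NormedSpace ℝ E]
    {S : Set E} (hS : IsClosed S) (h0 : (0 : E) ∈ S)
    (hmono : ∀ y ∈ S, ∀ z : E, ‖z‖ < ‖y‖ → z ∈ S) :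
    (∃ r : ℝ, 0 ≤ r ∧ S = Metric.closedBall 0 r) ∨ S = Set.univ := by
  by_cases hbdd : BddAbove (norm '' S)
  · left
    refine ⟨sSup (norm '' S), le_csSup_of_le hbdd (Set.mem_image_of_mem _ h0) (norm_nonneg _), ?_⟩
    refine subset_antisymm (fun x hx => ?_) ?_
    · simpa using le_csSup hbdd ⟨x, hx, rfl⟩
    have hball : Metric.ball 0 (sSup (norm '' S)) ⊆ S := fun z hz => by
      obtain ⟨_, ⟨y, hy, rfl⟩, hzy⟩ :=
        exists_lt_of_lt_csSup (Set.image_nonempty.2 ⟨0, h0⟩) (mem_ball_zero_iff.1 hz)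
      exact hmono y hy z hzy
    rcases eq_or_ne (sSup (norm '' S)) 0 with hr | hr
    · simpa [hr] using h0
    · rw [← closure_ball 0 hr]
      exact hS.closure_subset_iff.2 hball
  · right
    refine Set.eq_univ_of_forall fun z => ?_
    obtain ⟨_, ⟨y, hy, rfl⟩, hzy⟩ := not_bddAbove_iff.1 hbdd ‖z‖
    exact hmono y hy z hzy

theorem stmt6_general {H : Type*} [NormedAddCommGroup H] [InnerProductSpace ℝ H]
    (hdim : 2 ≤ Module.rank ℝ H)
    (Ω : H → EReal) (hlsc : LowerSemicontinuous Ω)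
    (hΩ : ∀ x y : H, ⟪x, y⟫ = 0 → Ω (x + y) ≥ max (Ω x) (Ω y)) :
    ∀ c : EReal, c ≥ Ω 0 →
      (∃ r : ℝ, 0 ≤ r ∧ {x : H | Ω x ≤ c} = Metric.closedBall (0 : H) r) ∨
      {x : H | Ω x ≤ c} = Set.univ := by
  intro c hc
  exact eq_closedBall_or_eq_univ_of_norm_lt (hlsc.isClosed_preimage c) hc
    fun y hy z hz => (thalesClosed_setOf_le hΩ c).mem_of_norm_lt hdim hy hz

theorem stmt6 {H : Type*} [NormedAddCommGroup H] [InnerProductSpace ℝ H] [CompleteSpace H]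
    (hdim : 2 ≤ Module.rank ℝ H)
    (Ω : H → EReal) (hlsc : LowerSemicontinuous Ω)
    (hΩ : ∀ x y : H, ⟪x, y⟫ = 0 → Ω (x + y) ≥ max (Ω x) (Ω y)) :
    ∀ c : EReal, c ≥ Ω 0 →
      (∃ r : ℝ, 0 ≤ r ∧ {x : H | Ω x ≤ c} = Metric.closedBall (0 : H) r) ∨
      {x : H | Ω x ≤ c} = Set.univ :=
  stmt6_general hdim Ω hlsc hΩ
end

section
/- Let H be a Hilbert space, w_1, …, w_ℓ ∈ H, f: ℝ^ℓ → ℝ ∪ {+∞}, and Ω(w) = h(‖w‖) with h nondecreasing. If J(w) = f(⟨w,w_1⟩, …, ⟨w,w_ℓ⟩) + Ω(w) admits a minimizer, then it admits a minimizer lying in span{w_1, …, w_ℓ}. -/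
/-!
Projecting a minimizer `w⋆` orthogonally onto `span {w₁, …, w_ℓ}` changes none of the inner
products `⟪w⋆, wᵢ⟫` and does not increase the norm, so with `h` monotone the projection is
again a minimizer.
-/

open RealInnerProductSpace

namespace Submodule

variable {H : Type*} [NormedAddCommGroup H] [InnerProductSpace ℝ H]

theorem inner_starProjection_of_mem_right (K : Submodule ℝ H) [K.HasOrthogonalProjection]
    (v : H) {x : H} (hx : x ∈ K) : ⟪K.starProjection v, x⟫ = ⟪v, x⟫ :=
  K.inner_orthogonalProjectionOnto_eq_of_mem_right ⟨x, hx⟩ v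

theorem comp_inner_add_comp_norm_starProjection_le {ι : Type*} (w : ι → H)
    (K : Submodule ℝ H) [K.HasOrthogonalProjection] (hw : ∀ i, w i ∈ K)
    (f : (ι → ℝ) → EReal) (h : ℝ → EReal) (hmono : Monotone h) (v : H) :
    f (fun i => ⟪K.starProjection v, w i⟫) + h ‖K.starProjection v‖ ≤
      f (fun i => ⟪v, w i⟫) + h ‖v‖ := by
  have hinner : (fun i => ⟪K.starProjection v, w i⟫) = fun i => ⟪v, w i⟫ :=
    funext fun i => K.inner_starProjection_of_mem_right v (hw i)
  rw [hinner]
  exact add_le_add_right (hmono (K.norm_starProjection_apply_le v)) _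

end Submodule

theorem stmt8_general {H : Type*} [NormedAddCommGroup H] [InnerProductSpace ℝ H]
    (l : ℕ) (w : Fin l → H) (f : (Fin l → ℝ) → EReal)
    (h : ℝ → EReal) (hmono : Monotone h)
    (J : H → EReal) (hJ : ∀ v, J v = f (fun i => ⟪v, w i⟫) + h ‖v‖)
    (hmin : ∃ wstar : H, ∀ v, J wstar ≤ J v) :
    ∃ wstar ∈ Submodule.span ℝ (Set.range w), ∀ v, J wstar ≤ J v := by
  obtain ⟨wstar, hwstar⟩ := hmin
  set K := Submodule.span ℝ (Set.range w)
  have : FiniteDimensional ℝ K := FiniteDimensional.span_of_finite ℝ (Set.finite_range w)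
  refine ⟨K.starProjection wstar, K.starProjection_apply_mem wstar, fun v => ?_⟩
  calc J (K.starProjection wstar) ≤ J wstar := by
        rw [hJ, hJ]
        exact Submodule.comp_inner_add_comp_norm_starProjection_le w K
          (fun i => Submodule.subset_span ⟨i, rfl⟩) f h hmono wstar
    _ ≤ J v := hwstar v

theorem stmt8 {H : Type*} [NormedAddCommGroup H] [InnerProductSpace ℝ H] [CompleteSpace H]
    (l : ℕ) (w : Fin l → H) (f : (Fin l → ℝ) → EReal)
    (h : ℝ → EReal) (hmono : Monotone h)
    (J : H → EReal) (hJ : ∀ v, J v = f (fun i => ⟪v, w i⟫) + h ‖v‖)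
    (hmin : ∃ wstar : H, ∀ v, J wstar ≤ J v) :
    ∃ wstar ∈ Submodule.span ℝ (Set.range w), ∀ v, J wstar ≤ J v :=
  stmt8_general l w f h hmono J hJ hmin
end
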